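/- There exists an absolute constant C > 0 with the following property: for every n ∈ ℕ₀, every interval I ⊆ ℝ with |I| = 2^{−n}, and every analytic trigonometric polynomial f(θ) = Σ_{j=0}^{M} f_j e^{2πijθ} (with f_j ∈ ℂ, extended by f_j := 0 for j > M), one has ∫_I |f(θ)|² dθ ≤ C · 2^{−n} · Σ_{k=0}^{∞} ( Σ_{j=k·2^n}^{(k+1)·2^n − 1} |f_j| )². -/

import Mathlib

open MeasureTheory Finset intervalIntegral

noncomputable def EE (t : ℝ) : ℂ := Complex.exp (2 * Real.pi * t * Complex.I)

lemma EE_add (s t : ℝ) : EE (s + t) = EE s * EE t := by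
  rw [EE, EE, EE, ← Complex.exp_add]; push_cast; ring_nf

lemma EE_norm (t : ℝ) : ‖EE t‖ = 1 := by
  rw [EE, Complex.norm_exp]
  norm_num [Complex.mul_I_re, Complex.mul_re]

lemma EE_cont : Continuous EE := by
  unfold EE; fun_prop

lemma EE_conj (t : ℝ) : (starRingEnd ℂ) (EE t) = EE (-t) := by
  rw [EE, EE, ← Complex.exp_conj]
  congr 1
  simp only [map_mul, Complex.conj_I, Complex.conj_ofReal, map_ofNat]
  rw [show ((-t : ℝ) : ℂ) = -(t:ℂ) by push_cast; ring]
  ring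

lemma integral_EE (m : ℤ) (a : ℝ) (hm : m ≠ 0) :
    ∫ θ in a..(a+1), EE (m * θ) = 0 := by
  have h : ∀ θ : ℝ, EE (m * θ) = Complex.exp ((2 * Real.pi * m * Complex.I) * θ) := by
    intro θ; rw [EE]; congr 1; push_cast; ring
  have hc : (2 * Real.pi * m * Complex.I : ℂ) ≠ 0 := by
    simp [Complex.I_ne_zero, Real.pi_ne_zero, hm]
  rw [intervalIntegral.integral_congr (g := fun θ : ℝ => Complex.exp ((2 * Real.pi * m * Complex.I) * θ)) (fun θ _ => h θ)]
  rw [integral_exp_mul_complex hc]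
  have : Complex.exp (2 * Real.pi * m * Complex.I * ((a:ℂ)+1)) = Complex.exp (2 * Real.pi * m * Complex.I * a) := by
    rw [show (2 * Real.pi * m * Complex.I * (a+1) : ℂ) = 2 * Real.pi * m * Complex.I * a + m * (2 * Real.pi * Complex.I) by push_cast; ring,
      Complex.exp_add, Complex.exp_int_mul_two_pi_mul_I, mul_one]
  push_cast
  rw [this]; simp

lemma integral_EE_zero (a : ℝ) : ∫ θ in a..(a+1), EE (0 * θ) = 1 := by
  simp [EE]

lemma parseval (K : ℕ) (c : ℕ → ℂ) (a : ℝ) :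
    ∫ θ in a..(a+1), ‖∑ m ∈ range K, c m * EE (m * θ)‖^2
      = ∑ m ∈ range K, ‖c m‖^2 := by
  set P : ℝ → ℂ := fun θ => ∑ m ∈ range K, c m * EE ((m : ℝ) * θ) with hP
  have hPc : Continuous P := by
    apply continuous_finset_sum
    intro m _
    exact continuous_const.mul (EE_cont.comp (continuous_const.mul continuous_id))
  have key : ∀ θ, P θ * (starRingEnd ℂ) (P θ)
      = ∑ m ∈ range K, ∑ m' ∈ range K,
          (c m * (starRingEnd ℂ) (c m')) * EE (((m:ℝ) - (m':ℝ)) * θ) := by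
    intro θ
    rw [hP]
    simp only [map_sum, Finset.sum_mul_sum, map_mul, EE_conj]
    refine Finset.sum_congr rfl fun m _ => Finset.sum_congr rfl fun m' _ => ?_
    rw [show ((m:ℝ) - (m':ℝ)) * θ = (m:ℝ)*θ + (-((m':ℝ)*θ)) by ring, EE_add]
    ring
  have hterm : ∀ (m m' : ℕ), Continuous fun θ : ℝ =>
      (c m * (starRingEnd ℂ) (c m')) * EE (((m:ℝ) - (m':ℝ)) * θ) := fun m m' =>
    continuous_const.mul (EE_cont.comp ((continuous_const).mul continuous_id))
  have hInt : ∀ (m m' : ℕ),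
      (∫ θ in a..(a+1), (c m * (starRingEnd ℂ) (c m')) * EE (((m:ℝ)-(m':ℝ)) * θ))
      = if m = m' then c m * (starRingEnd ℂ) (c m') else 0 := by
    intro m m'
    rw [intervalIntegral.integral_const_mul]
    by_cases h : m = m'
    · subst h
      simp [EE]
    · have hm : ((m:ℤ) - (m':ℤ)) ≠ 0 := by
        intro hc; apply h; omega
      have : (fun θ:ℝ => EE (((m:ℝ)-(m':ℝ))*θ)) = fun θ:ℝ => EE (((((m:ℤ)-(m':ℤ)) : ℤ) : ℝ) * θ) := by
        funext θ; push_cast; rfl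
      rw [this, integral_EE _ _ hm]
      simp [h]
  have hJ : (∫ θ in a..(a+1), P θ * (starRingEnd ℂ) (P θ))
      = ∑ m ∈ range K, c m * (starRingEnd ℂ) (c m) := by
    rw [intervalIntegral.integral_congr (g := fun θ => ∑ m ∈ range K, ∑ m' ∈ range K,
          (c m * (starRingEnd ℂ) (c m')) * EE (((m:ℝ) - (m':ℝ)) * θ)) (fun θ _ => key θ)]
    rw [intervalIntegral.integral_finset_sum (fun m _ =>
      (continuous_finset_sum _ (fun m' _ => hterm m m')).intervalIntegrable a (a+1))]
    rw [Finset.sum_congr rfl (fun m _ => intervalIntegral.integral_finset_sum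
      (fun m' _ => (hterm m m').intervalIntegrable a (a+1)))]
    simp only [hInt, Finset.sum_ite_eq, Finset.mem_range]
    exact Finset.sum_congr rfl fun m hm => by simp [Finset.mem_range.mp hm]
  have hre : ∀ θ, ‖P θ‖^2 = (P θ * (starRingEnd ℂ) (P θ)).re := by
    intro θ
    rw [Complex.mul_conj]
    simp [Complex.normSq_eq_norm_sq]
    norm_cast
  have hle : a ≤ a + 1 := by linarith
  have hIcont : Continuous fun θ => P θ * (starRingEnd ℂ) (P θ) :=
    hPc.mul (Complex.continuous_conj.comp hPc)
  calc ∫ θ in a..(a+1), ‖P θ‖^2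
      = ∫ θ in a..(a+1), (P θ * (starRingEnd ℂ) (P θ)).re :=
        intervalIntegral.integral_congr (fun θ _ => hre θ)
    _ = (∫ θ in a..(a+1), P θ * (starRingEnd ℂ) (P θ)).re := by
        rw [intervalIntegral.integral_of_le hle, intervalIntegral.integral_of_le hle]
        simpa using integral_re ((hIcont.intervalIntegrable a (a+1)).1)
    _ = (∑ m ∈ range K, c m * (starRingEnd ℂ) (c m)).re := by rw [hJ]
    _ = ∑ m ∈ range K, ‖c m‖^2 := by
        rw [Complex.re_sum]
        exact Finset.sum_congr rfl fun m _ => by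
          rw [Complex.mul_conj]; simp [Complex.normSq_eq_norm_sq]; norm_cast

lemma EE_re (t : ℝ) : (EE t).re = Real.cos (2 * Real.pi * t) := by
  rw [EE, show (2*(Real.pi:ℂ)*(t:ℂ)*Complex.I : ℂ) = ((2*Real.pi*t : ℝ):ℂ) * Complex.I by
    push_cast; ring, Complex.exp_ofReal_mul_I_re]

lemma sum_id_real (n : ℕ) : ∑ r ∈ range n, (r:ℝ) = n*((n:ℝ)-1)/2 := by
  induction n with
  | zero => simp
  | succ k ih => rw [Finset.sum_range_succ, ih]; push_cast; ring

lemma sum_sq_real (n : ℕ) : ∑ r ∈ range n, (r:ℝ)^2 = n*((n:ℝ)-1)*(2*n-1)/6 := by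
  induction n with
  | zero => simp
  | succ k ih => rw [Finset.sum_range_succ, ih]; push_cast; ring

lemma sum_centered_sq_le (N : ℕ) :
    ∑ r ∈ range N, ((r:ℝ) - ((N:ℝ)-1)/2)^2 ≤ (N:ℝ)^3/12 := by
  have expand : ∀ r : ℕ, ((r:ℝ) - ((N:ℝ)-1)/2)^2
      = (r:ℝ)^2 - ((N:ℝ)-1)*(r:ℝ) + (((N:ℝ)-1)/2)^2 := fun r => by ring
  rw [Finset.sum_congr rfl (fun r _ => expand r)]
  rw [Finset.sum_add_distrib, Finset.sum_sub_distrib, ← Finset.mul_sum,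
    Finset.sum_const, Finset.card_range, nsmul_eq_mul, sum_id_real, sum_sq_real]
  have hN : (0:ℝ) ≤ N := Nat.cast_nonneg N
  nlinarith [hN]

lemma D_lower (N : ℕ) (hN : 0 < N) (x : ℝ) (hx : |x| ≤ 1/(2*N)) :
    (N:ℝ)/2 ≤ ‖∑ r ∈ range N, EE ((r:ℝ) * x)‖ := by
  set c : ℝ := ((N:ℝ)-1)/2 with hc
  have hz : EE (-c * x) * ∑ r ∈ range N, EE ((r:ℝ) * x)
      = ∑ r ∈ range N, EE (((r:ℝ) - c) * x) := by
    rw [Finset.mul_sum]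
    refine Finset.sum_congr rfl fun r _ => ?_
    rw [← EE_add]
    congr 1
    ring
  have hre : (∑ r ∈ range N, EE (((r:ℝ)-c)*x)).re
      = ∑ r ∈ range N, Real.cos (2*Real.pi*(((r:ℝ)-c)*x)) := by
    rw [Complex.re_sum]
    exact Finset.sum_congr rfl fun r _ => EE_re _
  have hNpos : (0:ℝ) < N := by exact_mod_cast hN
  have hx2 : x^2 ≤ 1/(4*(N:ℝ)^2) := by
    have h1 : x^2 ≤ (1/(2*(N:ℝ)))^2 := sq_le_sq' (abs_le.mp hx).1 (abs_le.mp hx).2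
    have h2 : (1/(2*(N:ℝ)))^2 = 1/(4*(N:ℝ)^2) := by field_simp; ring
    linarith
  have hpi : Real.pi^2 ≤ 12 := by nlinarith [Real.pi_lt_d2, Real.pi_pos]
  have hS := sum_centered_sq_le N
  have hSnn : (0:ℝ) ≤ ∑ r ∈ range N, ((r:ℝ) - c)^2 :=
    Finset.sum_nonneg fun r _ => sq_nonneg _
  have hbound : (N:ℝ)/2 ≤ ∑ r ∈ range N, Real.cos (2*Real.pi*(((r:ℝ)-c)*x)) := by
    have hterm : ∀ r ∈ range N, 1 - (2*Real.pi*(((r:ℝ)-c)*x))^2/2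
        ≤ Real.cos (2*Real.pi*(((r:ℝ)-c)*x)) := fun r _ => Real.one_sub_sq_div_two_le_cos
    have hsum1 : ∑ r ∈ range N, (1 - (2*Real.pi*(((r:ℝ)-c)*x))^2/2)
        = (N:ℝ) - 2*Real.pi^2*x^2 * ∑ r ∈ range N, ((r:ℝ) - c)^2 := by
      rw [Finset.sum_sub_distrib, Finset.sum_const, Finset.card_range, nsmul_eq_mul, mul_one,
        Finset.mul_sum]
      congr 1
      exact Finset.sum_congr rfl fun r _ => by ring
    have hprod : x^2 * ∑ r ∈ range N, ((r:ℝ) - c)^2 ≤ (1/(4*(N:ℝ)^2)) * ((N:ℝ)^3/12) :=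
      mul_le_mul hx2 hS hSnn (by positivity)
    have hval : (1/(4*(N:ℝ)^2)) * ((N:ℝ)^3/12) = (N:ℝ)/48 := by
      field_simp
      ring
    have h2 : 2*Real.pi^2*x^2 * ∑ r ∈ range N, ((r:ℝ) - c)^2 ≤ (N:ℝ)/2 := by
      have hxS : (0:ℝ) ≤ x^2 * ∑ r ∈ range N, ((r:ℝ) - c)^2 :=
        mul_nonneg (sq_nonneg _) hSnn
      have : 2*Real.pi^2*x^2 * ∑ r ∈ range N, ((r:ℝ) - c)^2
          ≤ 24 * (x^2 * ∑ r ∈ range N, ((r:ℝ) - c)^2) := by nlinarith [Real.pi_pos]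
      calc 2*Real.pi^2*x^2 * ∑ r ∈ range N, ((r:ℝ) - c)^2
          ≤ 24 * (x^2 * ∑ r ∈ range N, ((r:ℝ) - c)^2) := this
        _ ≤ 24 * ((N:ℝ)/48) := by rw [← hval]; exact mul_le_mul_of_nonneg_left hprod (by norm_num)
        _ = (N:ℝ)/2 := by ring
    calc (N:ℝ)/2 ≤ (N:ℝ) - 2*Real.pi^2*x^2 * ∑ r ∈ range N, ((r:ℝ) - c)^2 := by linarith
      _ = ∑ r ∈ range N, (1 - (2*Real.pi*(((r:ℝ)-c)*x))^2/2) := hsum1.symm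
      _ ≤ _ := Finset.sum_le_sum hterm
  calc (N:ℝ)/2 ≤ (∑ r ∈ range N, EE (((r:ℝ)-c)*x)).re := by rw [hre]; exact hbound
    _ ≤ ‖∑ r ∈ range N, EE (((r:ℝ)-c)*x)‖ := by
        exact Complex.re_le_norm _
    _ = ‖EE (-c * x) * ∑ r ∈ range N, EE ((r:ℝ) * x)‖ := by rw [hz]
    _ = ‖∑ r ∈ range N, EE ((r:ℝ) * x)‖ := by rw [norm_mul, EE_norm, one_mul]

lemma blocksum (N K : ℕ) (hN : 0 < N) (φ : ℕ → ℝ) :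
    ∑ m ∈ range (K*N), φ (m/N) = ∑ k ∈ range K, (N:ℝ) * φ k := by
  induction K with
  | zero => simp
  | succ k ih =>
    have h1 : k*N ≤ (k+1)*N := Nat.mul_le_mul_right N (by omega)
    rw [Finset.range_eq_Ico, ← Finset.sum_Ico_consecutive _ (Nat.zero_le (k*N)) h1,
      ← Finset.range_eq_Ico, ih, Finset.sum_range_succ]
    congr 1
    have hconst : ∀ m ∈ Finset.Ico (k*N) ((k+1)*N), φ (m/N) = φ k := by
      intro m hm
      rw [Finset.mem_Ico] at hm
      rw [Nat.div_eq_of_lt_le hm.1 (by simpa using hm.2)]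
    rw [Finset.sum_congr rfl hconst, Finset.sum_const, Nat.card_Ico, nsmul_eq_mul]
    congr 1
    have : (k+1)*N - k*N = N := by
      have : (k+1)*N = k*N + N := by ring
      omega
    rw [this]

lemma shiftsum (K : ℕ) (b : ℕ → ℝ) (hb : ∀ k, 0 ≤ b k) :
    ∑ k ∈ range K, b (k-1)^2 ≤ 2 * ∑ k ∈ range K, b k^2 := by
  rcases Nat.eq_zero_or_pos K with h | h
  · simp [h]
  · obtain ⟨L, rfl⟩ : ∃ L, K = L + 1 := ⟨K - 1, by omega⟩
    rw [Finset.sum_range_succ']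
    have e1 : ∑ k ∈ range L, b ((k+1)-1)^2 = ∑ k ∈ range L, b k^2 := by
      apply Finset.sum_congr rfl; intro k _; congr 1
    rw [e1]
    have h2 : ∑ k ∈ range L, b k^2 ≤ ∑ k ∈ range (L+1), b k^2 :=
      Finset.sum_le_sum_of_subset_of_nonneg (Finset.range_subset_range.mpr (by omega))
        (fun i _ _ => sq_nonneg _)
    have h3 : b (0-1)^2 ≤ ∑ k ∈ range (L+1), b k^2 := by
      have : b 0^2 ≤ ∑ k ∈ range (L+1), b k^2 :=
        Finset.single_le_sum (fun i _ => sq_nonneg (b i)) (Finset.mem_range.mpr (by omega))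
      simpa using this
    linarith

/-- arithmetic-progression unconditionality estimate.
There is an absolute constant `C > 0` such that for every `n ∈ ℕ₀`, every interval
`I = [a, a + 2^{-n}]` of length `2^{-n}`, and every analytic trigonometric polynomial
`f(θ) = Σ_{j=0}^{M} f_j e^{2πijθ}` (coefficients extended by `0` beyond `M`),
`∫_I |f(θ)|² dθ ≤ C · 2^{-n} · Σ_{k=0}^∞ (Σ_{j=k·2^n}^{(k+1)·2^n - 1} |f_j|)²`. -/
theorem stmt_6 :
    ∃ C : ℝ, 0 < C ∧ ∀ (n : ℕ) (a : ℝ) (M : ℕ) (f : ℕ → ℂ), (∀ j, M < j → f j = 0) →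
      (∫ θ in a..(a + ((2:ℝ) ^ n)⁻¹),
          ‖∑ j ∈ Finset.range (M + 1),
              f j * Complex.exp (2 * Real.pi * j * θ * Complex.I)‖ ^ 2)
        ≤ C * ((2:ℝ) ^ n)⁻¹ *
            ∑' k : ℕ, (∑ j ∈ Finset.Ico (k * 2 ^ n) ((k + 1) * 2 ^ n), ‖f j‖) ^ 2 := by
  refine ⟨24, by norm_num, ?_⟩
  intro n a M f hf
  set N : ℕ := 2^n with hNdef
  have hN : 0 < N := Nat.pow_pos (by norm_num)
  have hNR : (0:ℝ) < (N:ℝ) := by exact_mod_cast hN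
  have hN1R : (1:ℝ) ≤ (N:ℝ) := by exact_mod_cast hN
  have hcast : ((2:ℝ)^n)⁻¹ = ((N:ℝ))⁻¹ := by
    congr 1
    rw [hNdef]
    push_cast
    ring
  set τ : ℝ := a + (N:ℝ)⁻¹/2 with hτ
  set F : ℝ → ℂ := fun θ => ∑ j ∈ Finset.range (M+1), f j * EE ((j:ℝ)*θ) with hF
  set D : ℝ → ℂ := fun θ => ∑ r ∈ Finset.range N, EE ((r:ℝ)*(θ-τ)) with hD
  set b : ℕ → ℝ := fun k => ∑ j ∈ Finset.Ico (k*N) ((k+1)*N), ‖f j‖ with hb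
  set K : ℕ := M + N with hK
  set cc : ℕ → ℂ := fun m =>
    ∑ r ∈ Finset.range N, (if r ≤ m then f (m-r) * EE (-((r:ℝ)*τ)) else 0) with hcc
  have bnn : ∀ k, 0 ≤ b k := fun k => Finset.sum_nonneg fun j _ => norm_nonneg _
  have hFc : Continuous F := continuous_finset_sum _ fun j _ =>
    continuous_const.mul (EE_cont.comp (continuous_const.mul continuous_id))
  have hDc : Continuous D := continuous_finset_sum _ fun r _ =>
    EE_cont.comp (continuous_const.mul (continuous_id.sub continuous_const))
  have hgc : Continuous fun θ => F θ * D θ := hFc.mul hDc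
  have hinv : (0:ℝ) < (N:ℝ)⁻¹ := by positivity
  have hab1 : a ≤ a + (N:ℝ)⁻¹ := by linarith
  -- rewrite the goal integrand
  have hgoalL : (∫ θ in a..(a + ((2:ℝ)^n)⁻¹),
      ‖∑ j ∈ Finset.range (M+1), f j * Complex.exp (2*Real.pi*j*θ*Complex.I)‖^2)
      = ∫ θ in a..(a+(N:ℝ)⁻¹), ‖F θ‖^2 := by
    rw [hcast]
    apply intervalIntegral.integral_congr
    intro θ _
    have he : ∀ j:ℕ, Complex.exp (2*Real.pi*j*θ*Complex.I) = EE ((j:ℝ)*θ) := by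
      intro j
      rw [EE]
      congr 1
      push_cast
      ring
    simp only [he, hF]
  rw [hgoalL, hcast]
  -- step 1
  have step1 : (∫ θ in a..a+(N:ℝ)⁻¹, ‖F θ‖^2)
      ≤ 4/(N:ℝ)^2 * ∫ θ in a..a+(N:ℝ)⁻¹, ‖F θ * D θ‖^2 := by
    rw [← intervalIntegral.integral_const_mul]
    apply intervalIntegral.integral_mono_on hab1
      ((hFc.norm.pow 2).intervalIntegrable a _)
      ((continuous_const.mul (hgc.norm.pow 2)).intervalIntegrable a _)
    intro θ hθ
    have hxabs : |θ - τ| ≤ 1/(2*(N:ℝ)) := by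
      rw [abs_le]
      rw [Set.mem_Icc] at hθ
      constructor <;> [skip; skip] <;>
        · rw [hτ]
          rw [show 1/(2*(N:ℝ)) = (N:ℝ)⁻¹/2 by rw [one_div, mul_inv]; ring]
          cases' hθ with h1 h2 <;> linarith
    have hDlow : (N:ℝ)/2 ≤ ‖D θ‖ := by
      have := D_lower N hN (θ - τ) hxabs
      simpa [hD] using this
    have hg : ‖F θ‖ * ((N:ℝ)/2) ≤ ‖F θ * D θ‖ := by
      rw [norm_mul]
      exact mul_le_mul_of_nonneg_left hDlow (norm_nonneg _)
    have hsq : (‖F θ‖ * ((N:ℝ)/2))^2 ≤ ‖F θ * D θ‖^2 := by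
      apply pow_le_pow_left₀ (by positivity) hg
    show ‖F θ‖^2 ≤ 4/(N:ℝ)^2 * ‖F θ * D θ‖^2
    rw [show (4:ℝ)/(N:ℝ)^2 * ‖F θ * D θ‖^2 = (4 * ‖F θ * D θ‖^2)/(N:ℝ)^2 by ring,
      le_div_iff₀ (by positivity)]
    nlinarith [hsq]
  -- step 2
  have step2 : (∫ θ in a..a+(N:ℝ)⁻¹, ‖F θ * D θ‖^2) ≤ ∫ θ in a..a+1, ‖F θ * D θ‖^2 := by
    apply intervalIntegral.integral_mono_interval (le_refl a) hab1
      (by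
        have : (N:ℝ)⁻¹ ≤ 1 := by
          rw [inv_le_one_iff₀]
          right; exact hN1R
        linarith)
      (Filter.Eventually.of_forall fun θ => by show (0:ℝ) ≤ ‖F θ * D θ‖^2; positivity)
      ((hgc.norm.pow 2).intervalIntegrable a _)
  -- expansion of F * D as trig polynomial with coefficients cc
  have expand : ∀ θ : ℝ, F θ * D θ = ∑ m ∈ Finset.range K, cc m * EE ((m:ℝ)*θ) := by
    intro θ
    have L : F θ * D θ = ∑ r ∈ Finset.range N, ∑ j ∈ Finset.range (M+1),
        f j * EE ((j:ℝ)*θ) * EE ((r:ℝ)*(θ-τ)) := by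
      rw [hF, hD, Finset.sum_mul_sum]
      exact Finset.sum_comm
    have R : ∑ m ∈ Finset.range K, cc m * EE ((m:ℝ)*θ)
        = ∑ r ∈ Finset.range N, ∑ m ∈ Finset.range K,
            (if r ≤ m then f (m-r) * EE (-((r:ℝ)*τ)) * EE ((m:ℝ)*θ) else 0) := by
      simp only [hcc, Finset.sum_mul, ite_mul, zero_mul]
      exact Finset.sum_comm
    rw [L, R]
    apply Finset.sum_congr rfl
    intro r hr
    rw [Finset.mem_range] at hr
    symm
    have e1 : ∑ m ∈ Finset.range K, (if r ≤ m then f (m-r) * EE (-((r:ℝ)*τ)) * EE ((m:ℝ)*θ) else 0)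
        = ∑ m ∈ Finset.Ico r K, f (m-r) * EE (-((r:ℝ)*τ)) * EE ((m:ℝ)*θ) := by
      rw [← Finset.sum_filter]
      apply Finset.sum_congr _ fun _ _ => rfl
      ext m
      simp [Finset.mem_filter, Finset.mem_Ico, Finset.mem_range]
      omega
    rw [e1, Finset.sum_Ico_eq_sum_range]
    have e2 : ∀ j ∈ Finset.range (K - r),
        f ((r+j)-r) * EE (-((r:ℝ)*τ)) * EE (((r+j:ℕ):ℝ)*θ)
        = f j * EE ((j:ℝ)*θ) * EE ((r:ℝ)*(θ-τ)) := by
      intro j _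
      have : (r+j)-r = j := by omega
      rw [this]
      rw [mul_assoc, mul_assoc, ← EE_add, ← EE_add]
      congr 2
      push_cast
      ring
    rw [Finset.sum_congr rfl e2]
    apply (Finset.sum_subset _ _).symm
    · apply Finset.range_subset_range.mpr
      omega
    · intro j _ hj
      rw [Finset.mem_range, not_lt] at hj
      rw [hf j (by omega), zero_mul, zero_mul]
  -- step 3 : Parseval
  have step3 : (∫ θ in a..a+1, ‖F θ * D θ‖^2) = ∑ m ∈ Finset.range K, ‖cc m‖^2 := by
    rw [intervalIntegral.integral_congr (g := fun θ => ‖∑ m ∈ Finset.range K, cc m * EE ((m:ℝ)*θ)‖^2)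
      (fun θ _ => by rw [expand θ])]
    exact parseval K cc a
  -- step 5 : coefficient bound
  have step5 : ∀ m : ℕ, ‖cc m‖ ≤ b (m/N - 1) + b (m/N) := by
    intro m
    have d1 : (m/N) * N ≤ m := Nat.div_mul_le_self m N
    have d2 : m < (m/N) * N + N := by
      have hmod : m % N < N := Nat.mod_lt m hN
      have hdm : N * (m/N) + m % N = m := Nat.div_add_mod m N
      calc m = N * (m/N) + m % N := hdm.symm
        _ < N * (m/N) + N := Nat.add_lt_add_left hmod _
        _ = (m/N) * N + N := by rw [Nat.mul_comm]
    have h1 : ‖cc m‖ ≤ ∑ r ∈ Finset.range N, (if r ≤ m then ‖f (m-r)‖ else 0) := by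
      refine (norm_sum_le _ _).trans (Finset.sum_le_sum fun r _ => ?_)
      by_cases h : r ≤ m
      · simp only [h, if_true]
        rw [norm_mul, EE_norm, mul_one]
      · simp [h]
    have himg : ∑ r ∈ (Finset.range N).filter (· ≤ m), ‖f (m - r)‖
        = ∑ j ∈ ((Finset.range N).filter (· ≤ m)).image (fun r => m - r), ‖f j‖ :=
      (Finset.sum_image (g := fun r => m - r) (f := fun j => ‖f j‖)
        (fun x hx y hy hxy => by
        rw [Finset.mem_coe, Finset.mem_filter] at hx hy
        have hxy' : m - x = m - y := hxy
        omega)).symm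
    have h2 : ∑ r ∈ Finset.range N, (if r ≤ m then ‖f (m-r)‖ else 0)
        ≤ ∑ j ∈ Finset.Ico ((m/N-1)*N) ((m/N)*N + N), ‖f j‖ := by
      rw [← Finset.sum_filter, himg]
      apply Finset.sum_le_sum_of_subset_of_nonneg _ fun j _ _ => norm_nonneg _
      intro j hj
      rw [Finset.mem_image] at hj
      obtain ⟨r, hr, rfl⟩ := hj
      rw [Finset.mem_filter, Finset.mem_range] at hr
      rw [Finset.mem_Ico]
      have hsub : (m/N-1)*N = (m/N)*N - N := by rw [Nat.sub_mul, one_mul]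
      rw [hsub]
      obtain ⟨p, hp, hp2, hp3⟩ : ∃ p, p = (m/N)*N ∧ p ≤ m ∧ m < p + N := ⟨_, rfl, d1, d2⟩
      rw [← hp]
      omega
    have h3 : ∑ j ∈ Finset.Ico ((m/N-1)*N) ((m/N)*N + N), ‖f j‖ ≤ b (m/N - 1) + b (m/N) := by
      rcases Nat.eq_zero_or_pos (m/N) with h | h
      · rw [h]
        have e : Finset.Ico ((0-1)*N) (0*N+N) = Finset.Ico (0*N) ((0+1)*N) := by
          congr 1 <;> omega
        rw [e]
        have hb0 : ∑ j ∈ Finset.Ico (0*N) ((0+1)*N), ‖f j‖ = b 0 := by simp only [hb]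
        rw [hb0]
        have h01 : (0:ℕ) - 1 = 0 := rfl
        rw [h01]
        linarith [bnn 0]
      · have hmid1 : (m/N-1)*N ≤ (m/N)*N := Nat.mul_le_mul_right N (by omega)
        have hmid2 : (m/N)*N ≤ (m/N+1)*N := Nat.mul_le_mul_right N (by omega)
        have e : (m/N)*N + N = (m/N+1)*N := by ring
        have split : ∑ j ∈ Finset.Ico ((m/N-1)*N) ((m/N)*N), ‖f j‖
            + ∑ j ∈ Finset.Ico ((m/N)*N) ((m/N+1)*N), ‖f j‖
            = ∑ j ∈ Finset.Ico ((m/N-1)*N) ((m/N+1)*N), ‖f j‖ :=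
          Finset.sum_Ico_consecutive _ hmid1 hmid2
        have hb1 : b (m/N-1) = ∑ j ∈ Finset.Ico ((m/N-1)*N) ((m/N)*N), ‖f j‖ := by
          simp only [hb]
          congr 2
          rw [show m/N-1+1 = m/N from by omega]
        have hb2 : b (m/N) = ∑ j ∈ Finset.Ico ((m/N)*N) ((m/N+1)*N), ‖f j‖ := by
          simp only [hb]
        rw [e, ← split, hb1, hb2]
    linarith
  -- step 6
  have step6 : ∑ m ∈ Finset.range K, ‖cc m‖^2 ≤ 6*(N:ℝ) * ∑ k ∈ Finset.range K, (b k)^2 := by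
    have m1 : ∑ m ∈ Finset.range K, ‖cc m‖^2
        ≤ ∑ m ∈ Finset.range K, (b (m/N - 1) + b (m/N))^2 :=
      Finset.sum_le_sum fun m _ => pow_le_pow_left₀ (norm_nonneg _) (step5 m) 2
    have m2 : ∑ m ∈ Finset.range K, (b (m/N - 1) + b (m/N))^2
        ≤ ∑ m ∈ Finset.range (K*N), (b (m/N - 1) + b (m/N))^2 :=
      Finset.sum_le_sum_of_subset_of_nonneg
        (Finset.range_subset_range.mpr (Nat.le_mul_of_pos_right K hN))
        (fun m _ _ => by positivity)
    have m3 : ∑ m ∈ Finset.range (K*N), (b (m/N - 1) + b (m/N))^2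
        = ∑ k ∈ Finset.range K, (N:ℝ) * (b (k-1) + b k)^2 :=
      blocksum N K hN (fun k => (b (k-1) + b k)^2)
    have m4 : ∑ k ∈ Finset.range K, (N:ℝ) * (b (k-1) + b k)^2
        ≤ (N:ℝ) * (2 * ∑ k ∈ Finset.range K, (b (k-1))^2 + 2 * ∑ k ∈ Finset.range K, (b k)^2) := by
      rw [← Finset.mul_sum]
      apply mul_le_mul_of_nonneg_left _ (le_of_lt hNR)
      have hterm : ∀ k ∈ Finset.range K, (b (k-1) + b k)^2 ≤ 2*b (k-1)^2 + 2*b k^2 :=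
        fun k _ => by nlinarith [sq_nonneg (b (k-1) - b k)]
      calc ∑ k ∈ Finset.range K, (b (k-1) + b k)^2
          ≤ ∑ k ∈ Finset.range K, (2*b (k-1)^2 + 2*b k^2) := Finset.sum_le_sum hterm
        _ = 2 * ∑ k ∈ Finset.range K, b (k-1)^2 + 2 * ∑ k ∈ Finset.range K, b k^2 := by
            rw [Finset.sum_add_distrib, ← Finset.mul_sum, ← Finset.mul_sum]
    have m5 := shiftsum K b bnn
    calc ∑ m ∈ Finset.range K, ‖cc m‖^2 ≤ _ := m1
      _ ≤ _ := m2
      _ = _ := m3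
      _ ≤ _ := m4
      _ ≤ (N:ℝ) * (2 * (2 * ∑ k ∈ Finset.range K, (b k)^2) + 2 * ∑ k ∈ Finset.range K, (b k)^2) := by
          apply mul_le_mul_of_nonneg_left _ (le_of_lt hNR)
          linarith
      _ = 6*(N:ℝ) * ∑ k ∈ Finset.range K, (b k)^2 := by ring
  -- step 7 : tsum
  have hbz : ∀ k, K ≤ k → b k = 0 := by
    intro k hk
    apply Finset.sum_eq_zero
    intro j hj
    rw [Finset.mem_Ico] at hj
    have h2 : k ≤ k * N := Nat.le_mul_of_pos_right k hN
    have hMj : M < j :=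
      lt_of_lt_of_le (Nat.lt_add_of_pos_right hN : M < M + N)
        (le_trans hk (le_trans h2 hj.1))
    rw [hf j hMj, norm_zero]
  have hsum : Summable (fun k => (b k)^2) := by
    apply summable_of_ne_finset_zero (s := Finset.range K)
    intro k hk
    rw [Finset.mem_range, not_lt] at hk
    rw [hbz k hk]
    norm_num
  have step7 : ∑ k ∈ Finset.range K, (b k)^2 ≤ ∑' k, (b k)^2 :=
    Summable.sum_le_tsum _ (fun k _ => sq_nonneg _) hsum
  -- combine
  have h4N : (0:ℝ) ≤ 4/(N:ℝ)^2 := by positivity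
  calc (∫ θ in a..a+(N:ℝ)⁻¹, ‖F θ‖^2)
      ≤ 4/(N:ℝ)^2 * ∫ θ in a..a+(N:ℝ)⁻¹, ‖F θ * D θ‖^2 := step1
    _ ≤ 4/(N:ℝ)^2 * ∫ θ in a..a+1, ‖F θ * D θ‖^2 := mul_le_mul_of_nonneg_left step2 h4N
    _ = 4/(N:ℝ)^2 * ∑ m ∈ Finset.range K, ‖cc m‖^2 := by rw [step3]
    _ ≤ 4/(N:ℝ)^2 * (6*(N:ℝ) * ∑ k ∈ Finset.range K, (b k)^2) :=
        mul_le_mul_of_nonneg_left step6 h4N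
    _ ≤ 4/(N:ℝ)^2 * (6*(N:ℝ) * ∑' k, (b k)^2) := by
        apply mul_le_mul_of_nonneg_left _ h4N
        apply mul_le_mul_of_nonneg_left step7 (by positivity)
    _ = 24 * ((N:ℝ))⁻¹ * ∑' k, (b k)^2 := by
        field_simp
        ring
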